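/- Let P(k−1) and R_n be symmetric positive definite, D a real matrix of compatible size, R_a = (D·P(k−1)·Dᵀ + R_n)⁻¹, and T = P(k−1)·Dᵀ·R_a. Then tr(P(k−1)) − tr(P(k−1) − T·D·P(k−1)) = tr(P(k−1)·Dᵀ·R_a·D·P(k−1)) ≥ λ_min(P(k−1))²·λ_min(R_a)·‖D‖_F², and in particular this difference is strictly positive whenever D ≠ 0. -/

import Mathlib

/-!
The trace difference is `tr(Mᵀ Rₐ M)` with `M = D P`. In the Loewner order
`Rₐ ≥ λ_min(Rₐ) I`, and `P ≥ λ_min(P) I ≥ 0` gives `P² ≥ λ_min(P)² I`; conjugating these bounds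
and taking traces yields `tr(Mᵀ Rₐ M) ≥ λ_min(Rₐ) tr(D P² Dᵀ) ≥ λ_min(Rₐ) λ_min(P)² ‖D‖_F²`.
-/

open Matrix

namespace Matrix

open scoped MatrixOrder ComplexOrder

variable {m n 𝕜 : Type*} [Fintype m] [Fintype n] [DecidableEq n] [RCLike 𝕜]

lemma IsHermitian.iInf_eigenvalues_smul_one_le {A : Matrix n n 𝕜} (hA : A.IsHermitian) :
    (⨅ i, hA.eigenvalues i) • (1 : Matrix n n 𝕜) ≤ A := by
  rw [← Algebra.algebraMap_eq_smul_one, algebraMap_le_iff_le_spectrum (ha := hA),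
    hA.spectrum_real_eq_range_eigenvalues]
  rintro _ ⟨i, rfl⟩
  exact ciInf_le (Set.finite_range _).bddBelow i

lemma sq_smul_one_le_mul_self {A : Matrix n n 𝕜} {c : ℝ} (hc : 0 ≤ c)
    (h : c • (1 : Matrix n n 𝕜) ≤ A) : c ^ 2 • (1 : Matrix n n 𝕜) ≤ A * A := by
  have hB : (A - c • 1).PosSemidef := h
  have key : A * A - c ^ 2 • 1 = (A - c • 1)ᴴ * (A - c • 1) + (2 * c) • (A - c • 1) := by
    rw [hB.isHermitian.eq]
    simp only [sub_mul, mul_sub, smul_mul_assoc, mul_smul_comm, one_mul, mul_one, smul_sub,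
      smul_smul]
    module
  change (A * A - c ^ 2 • 1).PosSemidef
  rw [key]
  exact (posSemidef_conjTranspose_mul_self _).add (hB.smul (by positivity))

lemma PosDef.iInf_eigenvalues_pos [Nonempty n] {A : Matrix n n 𝕜} (hA : A.PosDef) :
    0 < ⨅ i, hA.1.eigenvalues i := by
  obtain ⟨i, hi⟩ := exists_eq_ciInf_of_finite (f := hA.1.eigenvalues)
  exact hi ▸ hA.eigenvalues_pos i

omit [DecidableEq n] in
lemma trace_mul_transpose_self {R : Type*} [CommSemiring R] (D : Matrix m n R) :
    (D * Dᵀ).trace = ∑ i, ∑ j, D i j ^ 2 := by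
  simp only [trace, diag, mul_apply, transpose_apply, sq]

lemma le_trace_transpose_mul_mul {A : Matrix n n ℝ} {c : ℝ} (h : c • (1 : Matrix n n ℝ) ≤ A)
    (B : Matrix n m ℝ) : c * (Bᵀ * B).trace ≤ (Bᵀ * A * B).trace := by
  have := (PosSemidef.conjTranspose_mul_mul_same h B).trace_nonneg
  rwa [conjTranspose_eq_transpose_of_trivial, Matrix.mul_sub, Matrix.sub_mul, trace_sub,
    sub_nonneg, Matrix.mul_smul, Matrix.smul_mul, Matrix.mul_one, trace_smul, smul_eq_mul] at this

lemma PosSemidef.le_trace_mul_transpose_mul_mul [DecidableEq m] {P : Matrix n n ℝ}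
    {R : Matrix m m ℝ} (hP : P.PosSemidef) (hR : R.PosSemidef) (D : Matrix m n ℝ) :
    (⨅ i, hP.1.eigenvalues i) ^ 2 * (⨅ i, hR.1.eigenvalues i) * (∑ i, ∑ j, D i j ^ 2)
      ≤ (P * Dᵀ * R * D * P).trace := by
  set c := ⨅ i, hP.1.eigenvalues i
  set d := ⨅ i, hR.1.eigenvalues i
  have hPt : Pᵀ = P := hP.1
  have hc : 0 ≤ c := Real.iInf_nonneg hP.eigenvalues_nonneg
  have hd : 0 ≤ d := Real.iInf_nonneg hR.eigenvalues_nonneg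
  have hPP := le_trace_transpose_mul_mul
    (sq_smul_one_le_mul_self hc hP.1.iInf_eigenvalues_smul_one_le) Dᵀ
  rw [transpose_transpose, trace_mul_transpose_self] at hPP
  calc c ^ 2 * d * (∑ i, ∑ j, D i j ^ 2)
      ≤ d * (D * (P * P) * Dᵀ).trace := by nlinarith
    _ = d * ((D * P)ᵀ * (D * P)).trace := by
      rw [transpose_mul, hPt, trace_mul_comm (P * Dᵀ)]
      simp only [Matrix.mul_assoc]
    _ ≤ ((D * P)ᵀ * R * (D * P)).trace :=
      le_trace_transpose_mul_mul hR.1.iInf_eigenvalues_smul_one_le (D * P)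
    _ = (P * Dᵀ * R * D * P).trace := by
      rw [transpose_mul, hPt, Matrix.mul_assoc _ D P]

end Matrix

theorem stmt_8 {p s : ℕ} (P : Matrix (Fin p) (Fin p) ℝ)
    (Rn : Matrix (Fin s) (Fin s) ℝ) (D : Matrix (Fin s) (Fin p) ℝ)
    (hP : P.PosDef) (hRn : Rn.PosDef)
    (Ra : Matrix (Fin s) (Fin s) ℝ) (hRa : Ra = (D * P * Dᵀ + Rn)⁻¹)
    (hRaH : Ra.IsHermitian)
    (T : Matrix (Fin p) (Fin s) ℝ) (hT : T = P * Dᵀ * Ra) :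
    P.trace - (P - T * D * P).trace = (P * Dᵀ * Ra * D * P).trace ∧
    (⨅ i, hP.1.eigenvalues i) ^ 2 * (⨅ i, hRaH.eigenvalues i) * (∑ i, ∑ j, D i j ^ 2)
      ≤ (P * Dᵀ * Ra * D * P).trace ∧
    (D ≠ 0 → 0 < P.trace - (P - T * D * P).trace) := by
  have hRaPD : Ra.PosDef := hRa ▸ PosDef.inv
    (PosDef.posSemidef_add (hP.posSemidef.mul_mul_conjTranspose_same D) hRn)
  have hEq : P.trace - (P - T * D * P).trace = (P * Dᵀ * Ra * D * P).trace := by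
    rw [trace_sub, sub_sub_cancel, hT]
  have hBound := hP.posSemidef.le_trace_mul_transpose_mul_mul hRaPD.posSemidef D
  refine ⟨hEq, hBound, fun hD => ?_⟩
  obtain ⟨i, j, -⟩ : ∃ i j, D i j ≠ 0 := by simpa [← Matrix.ext_iff] using hD
  have : Nonempty (Fin s) := ⟨i⟩
  have : Nonempty (Fin p) := ⟨j⟩
  have hS : 0 < ∑ i, ∑ j, D i j ^ 2 := trace_mul_transpose_self D ▸
    (posSemidef_self_mul_conjTranspose D).trace_nonneg.lt_of_ne'
      (trace_mul_conjTranspose_self_eq_zero_iff.not.mpr hD)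
  rw [hEq]
  exact hBound.trans_lt' (mul_pos (mul_pos (pow_pos hP.iInf_eigenvalues_pos 2)
    hRaPD.iInf_eigenvalues_pos) hS)
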